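/- Let f, g ∈ E_{(β,μ)} with β > 0 and μ > 1, and set ψ(m) = (2π)^{−1/2} (f ∗ g)(m) where ∗ is the standard convolution on ℝ. Then ψ ∈ E_{(β,μ)} and for all z in the strip H_β = {|Im z| < β}, F⁻¹(f)(z) · F⁻¹(g)(z) = F⁻¹(ψ)(z). -/

import Mathlib

open MeasureTheory Real Complex

def memE (β μ : ℝ) (h : ℝ → ℂ) : Prop :=
  Continuous h ∧ BddAbove (Set.range fun m : ℝ =>
    (1 + |m|) ^ μ * Real.exp (β * |m|) * ‖h m‖)

/-! Multiplying by `e^{izm}` is compatible with convolution, since `e^{iz(m-t)} e^{izt} = e^{izm}`;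
for `|Im z| < β` both `F = f e^{iz·}` and `G = g e^{iz·}` are integrable, so `F⁻¹(f) F⁻¹(g) = F⁻¹(ψ)`
is the identity `∫ (F ⋆ G) = ∫ F · ∫ G` (Fubini). That `ψ ∈ E_{(β,μ)}` follows from
`e^{-β|m-t|} e^{-β|t|} ≤ e^{-β|m|}` and from the Peetre-type inequality
`(1+|m-t|)^{-μ} (1+|t|)^{-μ} ≤ 2^μ (1+|m|)^{-μ} ((1+|m-t|)^{-μ} + (1+|t|)^{-μ})`, whose right-hand
side is integrable in `t` when `μ > 1`. -/

open scoped Convolution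
open ContinuousLinearMap (mul)

/-- The reciprocal of the weight in the norm of `E_{(β,μ)}`. -/
noncomputable def decay (β μ m : ℝ) : ℝ := (1 + |m|) ^ (-μ) * Real.exp (-(β * |m|))

lemma decay_pos (β μ m : ℝ) : 0 < decay β μ m := by
  unfold decay; positivity

lemma rpow_mul_exp_mul_decay (β μ m : ℝ) :
    (1 + |m|) ^ μ * Real.exp (β * |m|) * decay β μ m = 1 := by
  have : 0 < 1 + |m| := by positivity
  rw [decay, Real.rpow_neg this.le, Real.exp_neg]
  field_simp

lemma memE_iff_exists_norm_le {β μ : ℝ} {h : ℝ → ℂ} :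
    memE β μ h ↔ Continuous h ∧ ∃ C, ∀ m, ‖h m‖ ≤ C * decay β μ m := by
  have hweight : ∀ m, 0 ≤ (1 + |m|) ^ μ * Real.exp (β * |m|) := fun m => by positivity
  refine and_congr_right fun _ => ⟨fun ⟨C, hC⟩ => ⟨C, fun m => ?_⟩, fun ⟨C, hC⟩ => ⟨C, ?_⟩⟩
  · calc ‖h m‖ = (1 + |m|) ^ μ * Real.exp (β * |m|) * ‖h m‖ * decay β μ m := by
          rw [mul_right_comm, rpow_mul_exp_mul_decay, one_mul]
      _ ≤ C * decay β μ m :=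
          mul_le_mul_of_nonneg_right (hC ⟨m, rfl⟩) (decay_pos β μ m).le
  · rintro _ ⟨m, rfl⟩
    calc (1 + |m|) ^ μ * Real.exp (β * |m|) * ‖h m‖
        ≤ (1 + |m|) ^ μ * Real.exp (β * |m|) * (C * decay β μ m) :=
          mul_le_mul_of_nonneg_left (hC m) (hweight m)
      _ = C := by rw [mul_left_comm, rpow_mul_exp_mul_decay, mul_one]

lemma nonneg_of_norm_le_mul_decay {β μ C : ℝ} {h : ℝ → ℂ}
    (hC : ∀ m, ‖h m‖ ≤ C * decay β μ m) : 0 ≤ C :=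
  nonneg_of_mul_nonneg_left ((norm_nonneg _).trans (hC 0)) (decay_pos β μ 0)

lemma integrable_one_add_abs_rpow_neg {μ : ℝ} (hμ : 1 < μ) :
    Integrable fun t : ℝ => (1 + |t|) ^ (-μ) := by
  simpa [Real.norm_eq_abs] using integrable_one_add_norm (E := ℝ) (μ := volume) (r := μ) (by simpa)

lemma decay_mul_exp_le {β μ b : ℝ} (hb : b ≤ β) (m : ℝ) :
    decay β μ m * Real.exp (b * |m|) ≤ (1 + |m|) ^ (-μ) := by
  rw [decay, mul_assoc, ← Real.exp_add]
  refine mul_le_of_le_one_right (by positivity) (Real.exp_le_one_iff.mpr ?_)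
  nlinarith [abs_nonneg m]

lemma norm_cexp_I_mul_le (z : ℂ) (m : ℝ) : ‖cexp (I * z * m)‖ ≤ Real.exp (|z.im| * |m|) := by
  rw [Complex.norm_exp, Real.exp_le_exp, ← abs_mul]
  refine le_trans (le_of_eq ?_) (neg_le_abs (z.im * m))
  simp [Complex.mul_re]

lemma memE.integrable_mul_cexp {β μ : ℝ} {h : ℝ → ℂ} (hh : memE β μ h) (hμ : 1 < μ) {z : ℂ}
    (hz : |z.im| ≤ β) : Integrable fun m : ℝ => h m * cexp (I * z * m) := by
  obtain ⟨hcont, C, hC⟩ := memE_iff_exists_norm_le.mp hh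
  refine ((integrable_one_add_abs_rpow_neg hμ).const_mul C).mono'
    (hcont.mul (by fun_prop)).aestronglyMeasurable (.of_forall fun m => ?_)
  calc ‖h m * cexp (I * z * m)‖ ≤ C * decay β μ m * Real.exp (|z.im| * |m|) := by
        rw [norm_mul]
        exact mul_le_mul (hC m) (norm_cexp_I_mul_le z m) (norm_nonneg _)
          (mul_nonneg (nonneg_of_norm_le_mul_decay hC) (decay_pos β μ m).le)
    _ ≤ C * (1 + |m|) ^ (-μ) := by
        rw [mul_assoc]
        exact mul_le_mul_of_nonneg_left (decay_mul_exp_le hz m) (nonneg_of_norm_le_mul_decay hC)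

lemma memE.integrable {β μ : ℝ} {h : ℝ → ℂ} (hh : memE β μ h) (hβ : 0 ≤ β) (hμ : 1 < μ) :
    Integrable h := by
  simpa using hh.integrable_mul_cexp hμ (z := 0) (by simpa using hβ)

lemma one_add_abs_rpow_neg_le_of_half_le {μ : ℝ} (hμ : 0 ≤ μ) {m s : ℝ} (hs : |m| / 2 ≤ |s|) :
    (1 + |s|) ^ (-μ) ≤ 2 ^ μ * (1 + |m|) ^ (-μ) := by
  calc (1 + |s|) ^ (-μ) ≤ ((1 + |m|) / 2) ^ (-μ) :=
        Real.rpow_le_rpow_of_nonpos (by positivity) (by linarith [abs_nonneg m]) (by linarith)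
    _ = 2 ^ μ * (1 + |m|) ^ (-μ) := by
        rw [Real.div_rpow (by positivity) (by norm_num), Real.rpow_neg (by norm_num : (0:ℝ) ≤ 2)]
        field_simp

/-- One of `|m - t|`, `|t|` is at least `|m| / 2`. -/
lemma one_add_abs_rpow_neg_mul_le {μ : ℝ} (hμ : 0 ≤ μ) (m t : ℝ) :
    (1 + |m - t|) ^ (-μ) * (1 + |t|) ^ (-μ) ≤
      2 ^ μ * (1 + |m|) ^ (-μ) * ((1 + |m - t|) ^ (-μ) + (1 + |t|) ^ (-μ)) := by
  have htri : |m| ≤ |m - t| + |t| := by simpa using abs_add_le (m - t) t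
  have hA : 0 ≤ (1 + |m - t|) ^ (-μ) := by positivity
  have hB : 0 ≤ (1 + |t|) ^ (-μ) := by positivity
  rcases le_total (|m| / 2) |m - t| with hs | hs
  · have := one_add_abs_rpow_neg_le_of_half_le hμ hs
    nlinarith
  · have := one_add_abs_rpow_neg_le_of_half_le hμ (m := m) (s := t) (by linarith)
    nlinarith

lemma exp_neg_mul_abs_sub_mul_le {β : ℝ} (hβ : 0 ≤ β) (m t : ℝ) :
    Real.exp (-(β * |m - t|)) * Real.exp (-(β * |t|)) ≤ Real.exp (-(β * |m|)) := by
  rw [← Real.exp_add, Real.exp_le_exp]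
  have htri : |m| ≤ |m - t| + |t| := by simpa using abs_add_le (m - t) t
  nlinarith [mul_le_mul_of_nonneg_left htri hβ]

lemma decay_sub_mul_decay_le {β μ : ℝ} (hβ : 0 ≤ β) (hμ : 0 ≤ μ) (m t : ℝ) :
    decay β μ (m - t) * decay β μ t ≤
      2 ^ μ * decay β μ m * ((1 + |m - t|) ^ (-μ) + (1 + |t|) ^ (-μ)) := by
  calc decay β μ (m - t) * decay β μ t
      = (1 + |m - t|) ^ (-μ) * (1 + |t|) ^ (-μ) *
          (Real.exp (-(β * |m - t|)) * Real.exp (-(β * |t|))) := by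
        simp only [decay]; ring
    _ ≤ 2 ^ μ * (1 + |m|) ^ (-μ) * ((1 + |m - t|) ^ (-μ) + (1 + |t|) ^ (-μ)) *
          Real.exp (-(β * |m|)) :=
        mul_le_mul (one_add_abs_rpow_neg_mul_le hμ m t) (exp_neg_mul_abs_sub_mul_le hβ m t)
          (by positivity) (by positivity)
    _ = 2 ^ μ * decay β μ m * ((1 + |m - t|) ^ (-μ) + (1 + |t|) ^ (-μ)) := by
        simp only [decay]; ring

lemma norm_convolution_le_mul_decay {β μ Cf Cg : ℝ} (hβ : 0 ≤ β) (hμ : 1 < μ) {f g : ℝ → ℂ}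
    (hf : ∀ m, ‖f m‖ ≤ Cf * decay β μ m) (hg : ∀ m, ‖g m‖ ≤ Cg * decay β μ m) (m : ℝ) :
    ‖(f ⋆[mul ℂ ℂ] g) m‖ ≤
      Cf * Cg * 2 ^ μ * (2 * ∫ t, (1 + |t|) ^ (-μ)) * decay β μ m := by
  have hw := integrable_one_add_abs_rpow_neg hμ
  have hCf := nonneg_of_norm_le_mul_decay hf
  have hCg := nonneg_of_norm_le_mul_decay hg
  have hpt : ∀ t, ‖f (m - t) * g t‖ ≤ Cf * Cg * 2 ^ μ * decay β μ m *
      ((1 + |m - t|) ^ (-μ) + (1 + |t|) ^ (-μ)) := fun t => by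
    calc ‖f (m - t) * g t‖ ≤ Cf * decay β μ (m - t) * (Cg * decay β μ t) := by
          rw [norm_mul]
          exact mul_le_mul (hf _) (hg t) (norm_nonneg _)
            (mul_nonneg hCf (decay_pos β μ _).le)
      _ = Cf * Cg * (decay β μ (m - t) * decay β μ t) := by ring
      _ ≤ Cf * Cg * (2 ^ μ * decay β μ m * ((1 + |m - t|) ^ (-μ) + (1 + |t|) ^ (-μ))) :=
          mul_le_mul_of_nonneg_left (decay_sub_mul_decay_le hβ (by linarith) m t)
            (mul_nonneg hCf hCg)
      _ = _ := by ring
  calc ‖(f ⋆[mul ℂ ℂ] g) m‖ = ‖∫ t, f (m - t) * g t‖ := by rw [convolution_mul_swap]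
    _ ≤ ∫ t, Cf * Cg * 2 ^ μ * decay β μ m * ((1 + |m - t|) ^ (-μ) + (1 + |t|) ^ (-μ)) :=
        norm_integral_le_of_norm_le (((hw.comp_sub_left m).add hw).const_mul _) (.of_forall hpt)
    _ = _ := by
        rw [integral_const_mul, integral_add (hw.comp_sub_left m) hw,
          integral_sub_left_eq_self (fun t : ℝ => (1 + |t|) ^ (-μ)) volume m]
        ring

lemma memE.bddAbove_norm {β μ : ℝ} {h : ℝ → ℂ} (hh : memE β μ h) (hβ : 0 ≤ β) (hμ : 0 ≤ μ) :
    BddAbove (Set.range fun m => ‖h m‖) := by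
  obtain ⟨-, C, hC⟩ := memE_iff_exists_norm_le.mp hh
  refine ⟨C, Set.forall_mem_range.mpr fun m => (hC m).trans ?_⟩
  refine mul_le_of_le_one_right (nonneg_of_norm_le_mul_decay hC) ?_
  calc decay β μ m = decay β μ m * Real.exp (0 * |m|) := by simp
    _ ≤ (1 + |m|) ^ (-μ) := decay_mul_exp_le hβ m
    _ ≤ 1 := Real.rpow_le_one_of_one_le_of_nonpos (by linarith [abs_nonneg m]) (by linarith)

lemma memE.convolution {β μ : ℝ} {f g : ℝ → ℂ} (hf : memE β μ f) (hg : memE β μ g)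
    (hβ : 0 ≤ β) (hμ : 1 < μ) : memE β μ (f ⋆[mul ℂ ℂ] g) := by
  obtain ⟨hfc, Cf, hCf⟩ := memE_iff_exists_norm_le.mp hf
  obtain ⟨-, Cg, hCg⟩ := memE_iff_exists_norm_le.mp hg
  exact memE_iff_exists_norm_le.mpr
    ⟨(hf.bddAbove_norm hβ (by linarith)).continuous_convolution_left_of_integrable _ hfc
      (hg.integrable hβ hμ), _, norm_convolution_le_mul_decay hβ hμ hCf hCg⟩

lemma memE.const_mul {β μ : ℝ} {h : ℝ → ℂ} (hh : memE β μ h) (c : ℂ) :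
    memE β μ fun m => c * h m := by
  obtain ⟨hcont, C, hC⟩ := memE_iff_exists_norm_le.mp hh
  refine memE_iff_exists_norm_le.mpr ⟨continuous_const.mul hcont, ‖c‖ * C, fun m => ?_⟩
  rw [norm_mul, mul_assoc]
  exact mul_le_mul_of_nonneg_left (hC m) (norm_nonneg c)

lemma integral_convolution_mul_cexp {f g : ℝ → ℂ} {z : ℂ}
    (hf : Integrable fun m : ℝ => f m * cexp (I * z * m))
    (hg : Integrable fun m : ℝ => g m * cexp (I * z * m)) :
    ∫ m : ℝ, (f ⋆[mul ℂ ℂ] g) m * cexp (I * z * m) =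
      (∫ m : ℝ, f m * cexp (I * z * m)) * ∫ m : ℝ, g m * cexp (I * z * m) := by
  have hmul : (fun m : ℝ => (f ⋆[mul ℂ ℂ] g) m * cexp (I * z * m)) =
      (fun m : ℝ => f m * cexp (I * z * m)) ⋆[mul ℂ ℂ] (fun m : ℝ => g m * cexp (I * z * m)) := by
    ext m
    simp only [convolution_mul, ← integral_mul_const]
    refine integral_congr_ae (.of_forall fun t => ?_)
    have : cexp (I * z * m) = cexp (I * z * t) * cexp (I * z * ↑(m - t)) := by
      rw [← Complex.exp_add]; push_cast; ring_nf
    simp only [this]; ring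
  rw [hmul, integral_convolution (mul ℂ ℂ) hf hg]
  rfl

/-- For `f, g ∈ E_{(β,μ)}` with `β > 0`, `μ > 1`, the function
`ψ(m) = (2π)^{-1/2} (f∗g)(m)` belongs to `E_{(β,μ)}` and
`F⁻¹(f)(z)·F⁻¹(g)(z) = F⁻¹(ψ)(z)` on the strip `H_β`. -/
theorem inverse_fourier_of_convolution (β μ : ℝ) (hβ : 0 < β) (hμ : 1 < μ)
    (f g : ℝ → ℂ) (hf : memE β μ f) (hg : memE β μ g) :
    memE β μ (fun m => ((Real.sqrt (2 * Real.pi))⁻¹ : ℝ) *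
      ∫ m₁ : ℝ, f (m - m₁) * g m₁) ∧
    ∀ z : ℂ, |z.im| < β →
      (((Real.sqrt (2 * Real.pi))⁻¹ : ℝ) *
          ∫ m : ℝ, f m * Complex.exp (Complex.I * z * (m : ℂ))) *
        (((Real.sqrt (2 * Real.pi))⁻¹ : ℝ) *
          ∫ m : ℝ, g m * Complex.exp (Complex.I * z * (m : ℂ)))
      = ((Real.sqrt (2 * Real.pi))⁻¹ : ℝ) *
          ∫ m : ℝ, (((Real.sqrt (2 * Real.pi))⁻¹ : ℝ) *
              ∫ m₁ : ℝ, f (m - m₁) * g m₁) *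
            Complex.exp (Complex.I * z * (m : ℂ)) := by
  simp only [← convolution_mul_swap (f := f) (g := g)]
  refine ⟨(hf.convolution hg hβ.le hμ).const_mul _, fun z hz => ?_⟩
  simp only [mul_assoc _ _ (cexp _), integral_const_mul, integral_convolution_mul_cexp
    (hf.integrable_mul_cexp hμ hz.le) (hg.integrable_mul_cexp hμ hz.le)]
  ring
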